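/- Let (φ, ψ) be a matrix factorization of f ∈ S involving parameters a_1,...,a_r (i.e., entries are power series with polynomial dependence on the parameters such that φψ = ψφ = f·I identically in the parameters). If A_1,...,A_r are pairwise commuting m×m matrices over k, then the inflated pair (Φ(A_1,...,A_r), Ψ(A_1,...,A_r)) is a matrix factorization of f of size m times the original size. -/

import Mathlib

open Matrix MvPowerSeries

/-- The Knörrer-style inductively defined pair of `2^i × 2^i` matrices attached to two
sequences `u v : ℕ → S`: start with `([u 0], [v 0])` and at each step form
`([[φ, -v·1],[u·1, ψ]], [[ψ, v·1],[-u·1, φ]])`. -/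
def knorrerPair {S : Type} [CommRing S] (u v : ℕ → S) :
    (i : ℕ) → Matrix (Fin (2 ^ i)) (Fin (2 ^ i)) S × Matrix (Fin (2 ^ i)) (Fin (2 ^ i)) S
  | 0 => (Matrix.of fun _ _ => u 0, Matrix.of fun _ _ => v 0)
  | (i + 1) =>
    let p := knorrerPair u v i
    let e : Fin (2 ^ i) ⊕ Fin (2 ^ i) ≃ Fin (2 ^ (i + 1)) :=
      finSumFinEquiv.trans (finCongr (by rw [pow_succ, mul_two]))
    ((Matrix.reindex e e)
        (Matrix.fromBlocks p.1 ((-(v (i + 1))) • 1) ((u (i + 1)) • 1) p.2),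
     (Matrix.reindex e e)
        (Matrix.fromBlocks p.2 ((v (i + 1)) • 1) ((-(u (i + 1))) • 1) p.1))

/-- *Inflation*: given a ring homomorphism `ρ` from a commutative ring `R` into `m × m`
matrices over `k` (the image of a tuple of pairwise commuting matrices), a matrix with
entries in `R[[x's]]` is turned into a matrix of size `m` times bigger with entries in
`k[[x's]]`, by applying `ρ` to every coefficient of every entry. -/
noncomputable def inflate {k R : Type} [Field k] [CommRing R] {m : ℕ} {σ : Type}
    (ρ : R →+* Matrix (Fin m) (Fin m) k) {N : Type}
    (M : Matrix N N (MvPowerSeries σ R)) :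
    Matrix (N × Fin m) (N × Fin m) (MvPowerSeries σ k) :=
  Matrix.of fun p q =>
    (fun d => ρ (MvPowerSeries.coeff d (M p.1 q.1)) p.2 q.2 : MvPowerSeries σ k)

/-! Inflation is a composite of ring homomorphisms: apply `ρ` to every coefficient, read a power
series over `Matₘ(k)` as an `m × m` matrix of power series over `k`, and flatten the resulting
`N × N` block matrix. Hence `ΦΨ` is the inflation of `φψ = f • 1`; and since `ρ` is a `k`-algebra
map, it sends the coefficients of `f` to scalar matrices, so that inflation is `f • 1` again. -/

namespace MvPowerSeries

variable {σ α n : Type*} [Fintype n] [DecidableEq n] [Semiring α]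

/-- The power-series analogue of `matPolyEquiv`. -/
def matrixEquiv : MvPowerSeries σ (Matrix n n α) ≃+* Matrix n n (MvPowerSeries σ α) where
  toFun P := Matrix.of fun i j => (fun d => P d i j : MvPowerSeries σ α)
  invFun M := fun d => Matrix.of fun i j => M i j d
  left_inv _ := rfl
  right_inv _ := rfl
  map_add' _ _ := rfl
  map_mul' P Q := by
    classical
    ext i j d
    change coeff d (P * Q) i j = _
    simp only [coeff_mul, Matrix.sum_apply, Matrix.mul_apply, map_sum]
    exact Finset.sum_comm

theorem coeff_matrixEquiv_apply (P : MvPowerSeries σ (Matrix n n α)) (i j : n) (d : σ →₀ ℕ) :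
    coeff d (matrixEquiv P i j) = coeff d P i j :=
  rfl

theorem matrixEquiv_map_algebraMap {k : Type*} [CommSemiring k] [Algebra k α]
    (f : MvPowerSeries σ k) :
    matrixEquiv (map (algebraMap k (Matrix n n α)) f) =
      Matrix.diagonal fun _ => map (algebraMap k α) f := by
  ext i j d
  rw [coeff_matrixEquiv_apply, coeff_map, Matrix.algebraMap_matrix_apply, Matrix.diagonal_apply]
  split_ifs <;> simp [coeff_map]

end MvPowerSeries

open MvPowerSeries

section Inflate

variable {k R : Type} [Field k] [CommRing R] {m : ℕ} {σ N : Type} [Fintype N] [DecidableEq N]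

noncomputable def inflateRingHom (ρ : R →+* Matrix (Fin m) (Fin m) k) :
    Matrix N N (MvPowerSeries σ R) →+* Matrix (N × Fin m) (N × Fin m) (MvPowerSeries σ k) :=
  (compRingEquiv N (Fin m) _).toRingHom.comp (matrixEquiv.toRingHom.comp (map ρ)).mapMatrix

theorem inflate_eq_inflateRingHom (ρ : R →+* Matrix (Fin m) (Fin m) k)
    (M : Matrix N N (MvPowerSeries σ R)) : inflate ρ M = inflateRingHom ρ M :=
  rfl

theorem inflate_mul (ρ : R →+* Matrix (Fin m) (Fin m) k) (M M' : Matrix N N (MvPowerSeries σ R)) :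
    inflate ρ (M * M') = inflate ρ M * inflate ρ M' := by
  simp only [inflate_eq_inflateRingHom, map_mul]

theorem inflate_map_algebraMap_smul_one [Algebra k R] (ρ : R →ₐ[k] Matrix (Fin m) (Fin m) k)
    (f : MvPowerSeries σ k) :
    inflate (σ := σ) (N := N) ρ.toRingHom (map (algebraMap k R) f • 1) = f • 1 := by
  have hdiag :
      matrixEquiv (map ρ.toRingHom (map (algebraMap k R) f)) = Matrix.diagonal fun _ => f := by
    rw [← RingHom.comp_apply, ← map_comp, AlgHom.toRingHom_eq_coe, ρ.comp_algebraMap,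
      matrixEquiv_map_algebraMap, Algebra.algebraMap_self, MvPowerSeries.map_id, RingHom.id_apply]
  rw [inflate_eq_inflateRingHom, smul_one_eq_diagonal, smul_one_eq_diagonal, inflateRingHom,
    RingHom.comp_apply, RingHom.mapMatrix_apply, diagonal_map (map_zero _)]
  simp only [RingHom.comp_apply, RingEquiv.toRingHom_eq_coe, RingEquiv.coe_toRingHom, hdiag,
    compRingEquiv_apply, comp_diagonal_diagonal]

end Inflate

/-- Let `(φ, ψ)` be a matrix factorization of `f ∈ k[[x_1,…,x_n,z]]`
involving parameters `a_1,…,a_r`: concretely, the parameters and the pairwise commuting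
`m × m` matrices `A_1,…,A_r` substituted for them are encoded by a commutative
`k`-algebra `R` and an algebra map `ρ : R → Matₘ(k)`, the entries of `φ, ψ` are power
series with coefficients in `R`, and `φψ = ψφ = f·1` identically in the parameters
(i.e. over `R`).  Then the inflated pair `(Φ(A), Ψ(A))`, obtained by applying `ρ`
coefficientwise, is a matrix factorization of `f` of size `m` times the original size. -/
theorem inflate_matrix_factorization
    (k : Type) [Field k] (n m : ℕ)
    (R : Type) [CommRing R] [Algebra k R]
    (ρ : R →ₐ[k] Matrix (Fin m) (Fin m) k)
    (f : MvPowerSeries (Option (Fin n)) k)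
    (N : Type) [Fintype N] [DecidableEq N]
    (φ ψ : Matrix N N (MvPowerSeries (Option (Fin n)) R))
    (hφψ : φ * ψ = (MvPowerSeries.map (algebraMap k R) f) • 1)
    (hψφ : ψ * φ = (MvPowerSeries.map (algebraMap k R) f) • 1) :
    inflate ρ.toRingHom φ * inflate ρ.toRingHom ψ = f • 1 ∧
      inflate ρ.toRingHom ψ * inflate ρ.toRingHom φ = f • 1 := by
  simp only [← inflate_mul, hφψ, hψφ, inflate_map_algebraMap_smul_one, and_self]
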